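/- arXiv:2603.22010 — 8 statements merged into one kernel-verified Lean document; each statement's English description precedes it below -/
import Mathlib

section
/- Let 0 <= alpha <= 1/2, and let a, b in R^k with |a| <= r and |b| <= r. Let m = (a+b)/2. Then any point x in the open ball of radius alpha*|a-b| around m satisfying <x, m> < |m|^2 (or, in the case m = 0, satisfying x_1 < 0) lies in the open ball of radius r centered at the origin. -/
open scoped RealInnerProductSpace

theorem halfBall_subset_ball (k : ℕ) (hk : 0 < k) (α r : ℝ)
    (hα0 : 0 ≤ α) (hα : α ≤ 1 / 2)
    (a b x : EuclideanSpace ℝ (Fin k)) (ha : ‖a‖ ≤ r) (hb : ‖b‖ ≤ r)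
    (hx : ‖x - midpoint ℝ a b‖ < α * ‖a - b‖)
    (hx1 : midpoint ℝ a b ≠ 0 → ⟪x, midpoint ℝ a b⟫ < ‖midpoint ℝ a b‖ ^ 2)
    (hx2 : midpoint ℝ a b = 0 → x ⟨0, hk⟩ < 0) :
    ‖x‖ < r := by
  set m := midpoint ℝ a b with hm
  have hr0 : 0 ≤ r := le_trans (norm_nonneg a) ha
  have hab : α * ‖a - b‖ ≤ r := by
    have h1 : ‖a - b‖ ≤ ‖a‖ + ‖b‖ := norm_sub_le a b
    have h2 : 0 ≤ ‖a - b‖ := norm_nonneg _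
    nlinarith
  by_cases hm0 : m = 0
  · have : ‖x‖ < α * ‖a - b‖ := by simpa [hm0] using hx
    linarith
  · have key := hx1 hm0
    have hsum : a + b = m + m := (midpoint_add_self ℝ a b).symm
    have hnm : ‖a + b‖ = 2 * ‖m‖ := by
      rw [hsum, ← two_smul ℝ m, norm_smul]
      simp
    have hpar1 : ‖a + b‖ ^ 2 = ‖a‖ ^ 2 + 2 * ⟪a, b⟫ + ‖b‖ ^ 2 := norm_add_sq_real a b
    have hpar2 : ‖a - b‖ ^ 2 = ‖a‖ ^ 2 - 2 * ⟪a, b⟫ + ‖b‖ ^ 2 := norm_sub_sq_real a b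
    have hexp : ‖x‖ ^ 2 = ‖x - m‖ ^ 2 + 2 * ⟪x - m, m⟫ + ‖m‖ ^ 2 := by
      have := norm_add_sq_real (x - m) m
      simpa using this
    have hin : ⟪x - m, m⟫ = ⟪x, m⟫ - ‖m‖ ^ 2 := by
      rw [inner_sub_left, real_inner_self_eq_norm_sq]
    have hsq : ‖x - m‖ ^ 2 < (α * ‖a - b‖) ^ 2 :=
      pow_lt_pow_left₀ hx (norm_nonneg _) (by norm_num)
    have hα2 : (α * ‖a - b‖) ^ 2 ≤ (1 / 4) * ‖a - b‖ ^ 2 := by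
      have h1 : α ^ 2 ≤ 1 / 4 := by nlinarith
      have h2 : (0:ℝ) ≤ ‖a - b‖ ^ 2 := sq_nonneg _
      calc (α * ‖a - b‖) ^ 2 = α ^ 2 * ‖a - b‖ ^ 2 := by ring
        _ ≤ (1 / 4) * ‖a - b‖ ^ 2 := mul_le_mul_of_nonneg_right h1 h2
    have har : ‖a‖ ^ 2 ≤ r ^ 2 := pow_le_pow_left₀ (norm_nonneg a) ha 2
    have hbr : ‖b‖ ^ 2 ≤ r ^ 2 := pow_le_pow_left₀ (norm_nonneg b) hb 2
    have hnm2 : ‖a + b‖ ^ 2 = 4 * ‖m‖ ^ 2 := by rw [hnm]; ring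
    have hx2 : ‖x‖ ^ 2 < r ^ 2 := by nlinarith
    have := lt_of_pow_lt_pow_left₀ 2 hr0 hx2
    exact this
end

section
/- Let a_1, b_1, ..., a_n, b_n be points in R^k, and suppose each half-ball of the segment a_i b_i with radius alpha*|a_i - b_i| (centered at the midpoint m_i = (a_i+b_i)/2, oriented toward the origin) is contained in the ball of radius R around the origin, and that every point of R^k belongs to at most t of these open half-balls. Then sum_{i=1}^n (alpha*|a_i - b_i|)^k <= 2t * R^k. -/
open scoped RealInnerProductSpace Classical

/-- The open half-ball of the segment `ab` with radius `α * ‖a - b‖`, centered at the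
midpoint of `ab` and oriented towards the origin (when the midpoint is the origin itself,
it consists of the points of the ball with negative first coordinate). -/
def halfBall {k : ℕ} (α : ℝ) (a b : EuclideanSpace ℝ (Fin k)) :
    Set (EuclideanSpace ℝ (Fin k)) :=
  {x | ‖x - midpoint ℝ a b‖ < α * ‖a - b‖ ∧
    (midpoint ℝ a b ≠ 0 → ⟪x, midpoint ℝ a b⟫ < ‖midpoint ℝ a b‖ ^ 2) ∧
    (midpoint ℝ a b = 0 → ∀ h : 0 < k, x ⟨0, h⟩ < 0)}

/-! Each half-ball is a ball `B(mᵢ, rᵢ)` cut by an open half-space whose boundary hyperplane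
passes through `mᵢ`. The point reflection through `mᵢ` swaps the two halves and the hyperplane is
null, so the half-ball `Hᵢ` has volume at least `V_k rᵢ ^ k / 2`. Integrating the multiplicity
bound `∑ᵢ 1_{Hᵢ} ≤ t · 1_{B(0, R)}` gives `∑ᵢ V_k rᵢ ^ k ≤ 2 ∑ᵢ vol Hᵢ ≤ 2 t V_k R ^ k`. -/

open MeasureTheory Metric ENNReal

section Packing

variable {Ω ι : Type*} [MeasurableSpace Ω] [Fintype ι]

theorem sum_measure_le_mul_measure_iUnion_of_card_le (μ : Measure Ω) {A : ι → Set Ω}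
    (hA : ∀ i, MeasurableSet (A i)) {t : ℕ} (ht : ∀ x, (Finset.univ.filter (x ∈ A ·)).card ≤ t) :
    ∑ i, μ (A i) ≤ t * μ (⋃ i, A i) := by
  have hcount : ∀ x, ∑ i, (A i).indicator (1 : Ω → ℝ≥0∞) x
      ≤ (⋃ i, A i).indicator (fun _ => (t : ℝ≥0∞)) x := by
    intro x
    by_cases hx : x ∈ ⋃ i, A i
    · simp only [Set.indicator_of_mem hx, Set.indicator_apply, Pi.one_apply, Finset.sum_boole]
      exact_mod_cast ht x
    · have hxA : ∀ i, x ∉ A i := fun i hi => hx (Set.mem_iUnion_of_mem i hi)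
      simp [Set.indicator_of_notMem, hxA, hx]
  calc ∑ i, μ (A i) = ∑ i, ∫⁻ x, (A i).indicator 1 x ∂μ := by
        simp only [lintegral_indicator_one (hA _)]
    _ = ∫⁻ x, ∑ i, (A i).indicator 1 x ∂μ :=
        (lintegral_finsetSum _ fun i _ => measurable_one.indicator (hA i)).symm
    _ ≤ ∫⁻ x, (⋃ i, A i).indicator (fun _ => (t : ℝ≥0∞)) x ∂μ := lintegral_mono hcount
    _ = t * μ (⋃ i, A i) := lintegral_indicator_const (MeasurableSet.iUnion hA) _

end Packing

section Halfspace

variable {E : Type*} [NormedAddCommGroup E] [NormedSpace ℝ E] [MeasurableSpace E] [BorelSpace E]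
  [FiniteDimensional ℝ E] (μ : Measure E) [μ.IsAddHaarMeasure]

theorem addHaar_hyperplane {f : E →L[ℝ] ℝ} (hf : f ≠ 0) (m : E) : μ {x | f x = f m} = 0 := by
  have hker : {x | f x = f m} = (· + -m) ⁻¹' (LinearMap.ker (f : E →ₗ[ℝ] ℝ) : Set E) := by
    ext x
    simp [sub_eq_zero, ← sub_eq_add_neg]
  rw [hker, measure_preimage_add_right]
  exact Measure.addHaar_submodule μ _ fun htop => hf <| ContinuousLinearMap.coe_injective <|
    (LinearMap.ker_eq_top.mp htop).trans ContinuousLinearMap.toLinearMap_zero.symm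

theorem addHaar_ball_le_two_mul_addHaar_ball_inter_halfspace {f : E →L[ℝ] ℝ} (hf : f ≠ 0)
    (m : E) (r : ℝ) : μ (ball m r) ≤ 2 * μ (ball m r ∩ {x | f x < f m}) := by
  set H := ball m r ∩ {x | f x < f m}
  have hH : MeasurableSet H :=
    measurableSet_ball.inter (measurableSet_lt f.measurable measurable_const)
  have hreflect : μ ((m + m - ·) ⁻¹' H) = μ H :=
    (Measure.measurePreserving_sub_left μ (m + m)).measure_preimage hH.nullMeasurableSet
  have hcover : ball m r ⊆ H ∪ (m + m - ·) ⁻¹' H ∪ {x | f x = f m} := by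
    intro x hx
    have hx' : m + m - x ∈ ball m r := by
      rw [mem_ball_iff_norm] at hx ⊢
      rwa [show m + m - x - m = -(x - m) by abel, norm_neg]
    rcases lt_trichotomy (f x) (f m) with h | h | h
    · exact Or.inl (Or.inl ⟨hx, h⟩)
    · exact Or.inr h
    · refine Or.inl (Or.inr ⟨hx', ?_⟩)
      simp only [Set.mem_ofPred_eq, map_sub, map_add]
      linarith
  calc μ (ball m r) ≤ μ (H ∪ (m + m - ·) ⁻¹' H ∪ {x | f x = f m}) := measure_mono hcover
    _ ≤ μ H + μ ((m + m - ·) ⁻¹' H) + μ {x | f x = f m} :=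
        (measure_union_le _ _).trans (by gcongr; exact measure_union_le _ _)
    _ = 2 * μ H := by rw [hreflect, addHaar_hyperplane μ hf, add_zero, two_mul]

theorem sum_pow_finrank_le_of_sum_addHaar_ball_le [Nontrivial E] {ι : Type*} [Fintype ι]
    {c : ι → E} {r : ι → ℝ} (hr : ∀ i, 0 ≤ r i) {x : E} {R C : ℝ} (hR : 0 ≤ R) (hC : 0 ≤ C)
    (h : ∑ i, μ (ball (c i) (r i)) ≤ ENNReal.ofReal C * μ (ball x R)) :
    ∑ i, r i ^ Module.finrank ℝ E ≤ C * R ^ Module.finrank ℝ E := by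
  have hpos : μ (ball 0 1) ≠ 0 := (measure_ball_pos μ 0 one_pos).ne'
  have hfin : μ (ball 0 1) ≠ ⊤ := measure_ball_lt_top.ne
  simp only [Measure.addHaar_ball μ _ (hr _), Measure.addHaar_ball μ _ hR, ← Finset.sum_mul,
    ← mul_assoc, ← ENNReal.ofReal_mul hC] at h
  rwa [← ENNReal.ofReal_sum_of_nonneg fun i _ => pow_nonneg (hr i) _,
    ENNReal.mul_le_mul_iff_left hpos hfin,
    ENNReal.ofReal_le_ofReal_iff (by positivity)] at h

end Halfspace

section HalfBall

variable {k : ℕ} (α : ℝ) (a b : EuclideanSpace ℝ (Fin k))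

theorem halfBall_eq_ball_inter_halfspace (hk : 0 < k) :
    ∃ f : EuclideanSpace ℝ (Fin k) →L[ℝ] ℝ, f ≠ 0 ∧ halfBall α a b =
      ball (midpoint ℝ a b) (α * ‖a - b‖) ∩ {x | f x < f (midpoint ℝ a b)} := by
  by_cases hm : midpoint ℝ a b = 0
  · refine ⟨EuclideanSpace.proj (⟨0, hk⟩ : Fin k), fun h => ?_, ?_⟩
    · simpa using congrArg (· (EuclideanSpace.single (⟨0, hk⟩ : Fin k) (1 : ℝ))) h
    · ext x
      simp [halfBall, hm, hk]
  · refine ⟨innerSL ℝ (midpoint ℝ a b), fun h => hm ?_, ?_⟩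
    · simpa using congrArg (· (midpoint ℝ a b)) h
    · ext x
      simp [halfBall, hm, dist_eq_norm, real_inner_comm]

theorem measurableSet_halfBall (hk : 0 < k) : MeasurableSet (halfBall α a b) := by
  obtain ⟨f, -, h⟩ := halfBall_eq_ball_inter_halfspace α a b hk
  exact h ▸ measurableSet_ball.inter (measurableSet_lt f.measurable measurable_const)

theorem volume_ball_le_two_mul_volume_halfBall (hk : 0 < k) :
    volume (ball (midpoint ℝ a b) (α * ‖a - b‖)) ≤ 2 * volume (halfBall α a b) := by
  obtain ⟨f, hf, h⟩ := halfBall_eq_ball_inter_halfspace α a b hk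
  exact h ▸ addHaar_ball_le_two_mul_addHaar_ball_inter_halfspace volume hf _ _

end HalfBall

theorem halfBall_volume_packing_general (k n t : ℕ) (hk : 0 < k)
    (α R : ℝ) (hα : 0 ≤ α) (hR : 0 ≤ R)
    (a b : Fin n → EuclideanSpace ℝ (Fin k))
    (hsub : ∀ i, halfBall α (a i) (b i) ⊆ Metric.ball (0 : EuclideanSpace ℝ (Fin k)) R)
    (hfold : ∀ x : EuclideanSpace ℝ (Fin k),
      (Finset.univ.filter fun i => x ∈ halfBall α (a i) (b i)).card ≤ t) :
    ∑ i, (α * ‖a i - b i‖) ^ k ≤ 2 * t * R ^ k := by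
  have : Nonempty (Fin k) := Fin.pos_iff_nonempty.mp hk
  have hpack : ∑ i, volume (halfBall α (a i) (b i))
      ≤ t * volume (ball (0 : EuclideanSpace ℝ (Fin k)) R) :=
    (sum_measure_le_mul_measure_iUnion_of_card_le volume
      (fun i => measurableSet_halfBall α (a i) (b i) hk) hfold).trans
      (by gcongr; exact Set.iUnion_subset hsub)
  have hballs : ∑ i, volume (ball (midpoint ℝ (a i) (b i)) (α * ‖a i - b i‖))
      ≤ ENNReal.ofReal (2 * t) * volume (ball (0 : EuclideanSpace ℝ (Fin k)) R) :=
    calc _ ≤ ∑ i, 2 * volume (halfBall α (a i) (b i)) :=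
          Finset.sum_le_sum fun i _ => volume_ball_le_two_mul_volume_halfBall α (a i) (b i) hk
      _ = 2 * ∑ i, volume (halfBall α (a i) (b i)) := (Finset.mul_sum ..).symm
      _ ≤ 2 * (t * volume (ball (0 : EuclideanSpace ℝ (Fin k)) R)) := by gcongr
      _ = _ := by
        rw [ENNReal.ofReal_mul zero_le_two, ENNReal.ofReal_natCast, ENNReal.ofReal_ofNat,
          mul_assoc]
  have key := sum_pow_finrank_le_of_sum_addHaar_ball_le volume
    (fun i => mul_nonneg hα (norm_nonneg _)) hR (by positivity) hballs
  rwa [finrank_euclideanSpace_fin] at key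

theorem halfBall_volume_packing (k n t : ℕ) (hk : 0 < k) (ht : 1 ≤ t)
    (α R : ℝ) (hα : 0 ≤ α) (hR : 0 ≤ R)
    (a b : Fin n → EuclideanSpace ℝ (Fin k))
    (hsub : ∀ i, halfBall α (a i) (b i) ⊆ Metric.ball (0 : EuclideanSpace ℝ (Fin k)) R)
    (hfold : ∀ x : EuclideanSpace ℝ (Fin k),
      (Finset.univ.filter fun i => x ∈ halfBall α (a i) (b i)).card ≤ t) :
    ∑ i, (α * ‖a i - b i‖) ^ k ≤ 2 * t * R ^ k :=
  halfBall_volume_packing_general k n t hk α R hα hR a b hsub hfold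
end

section
/- Let X be a finite subset of R^k of even size, and let M be a perfect matching on X (a partition of X into pairs) minimizing the sum of squared edge lengths among all perfect matchings on X. Then for any two edges e = ab and f = cd of M, the squared distance between the midpoints of e and f is at least (|e|^2 + |f|^2)/4. -/
/-- `M` is a perfect matching on the finite set `X`: every edge of `M` joins two distinct
points of `X`, and every point of `X` belongs to exactly one edge of `M`. -/
def IsPerfectMatching {k : ℕ} (X : Finset (EuclideanSpace ℝ (Fin k)))
    (M : Finset (EuclideanSpace ℝ (Fin k) × EuclideanSpace ℝ (Fin k))) : Prop :=
  (∀ e ∈ M, e.1 ∈ X ∧ e.2 ∈ X ∧ e.1 ≠ e.2) ∧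
  ∀ x ∈ X, ∃! e, e ∈ M ∧ (x = e.1 ∨ x = e.2)

section Aux

variable {k : ℕ} {X : Finset (EuclideanSpace ℝ (Fin k))}
  {M : Finset (EuclideanSpace ℝ (Fin k) × EuclideanSpace ℝ (Fin k))}

lemma endpoints_ne (hM : IsPerfectMatching X M)
    {e f : EuclideanSpace ℝ (Fin k) × EuclideanSpace ℝ (Fin k)}
    (he : e ∈ M) (hf : f ∈ M) (hef : e ≠ f) :
    e.1 ≠ f.1 ∧ e.1 ≠ f.2 ∧ e.2 ≠ f.1 ∧ e.2 ≠ f.2 := by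
  have key : ∀ (x : EuclideanSpace ℝ (Fin k)), x ∈ X →
      (x = e.1 ∨ x = e.2) → (x = f.1 ∨ x = f.2) → False := by
    intro x hx hxe hxf
    obtain ⟨g, _, hu⟩ := hM.2 x hx
    exact hef ((hu e ⟨he, hxe⟩).trans (hu f ⟨hf, hxf⟩).symm)
  refine ⟨fun h => ?_, fun h => ?_, fun h => ?_, fun h => ?_⟩
  · exact key e.1 (hM.1 e he).1 (Or.inl rfl) (Or.inl h)
  · exact key e.1 (hM.1 e he).1 (Or.inl rfl) (Or.inr h)
  · exact key e.2 (hM.1 e he).2.1 (Or.inr rfl) (Or.inl h)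
  · exact key e.2 (hM.1 e he).2.1 (Or.inr rfl) (Or.inr h)

set_option maxHeartbeats 2000000 in
lemma swap_le (hM : IsPerfectMatching X M)
    (hmin : ∀ M', IsPerfectMatching X M' →
      ∑ g ∈ M, ‖g.1 - g.2‖ ^ 2 ≤ ∑ g ∈ M', ‖g.1 - g.2‖ ^ 2)
    {e f : EuclideanSpace ℝ (Fin k) × EuclideanSpace ℝ (Fin k)}
    (he : e ∈ M) (hf : f ∈ M) (hef : e ≠ f)
    {p q : EuclideanSpace ℝ (Fin k)}
    (hpq : (p = f.1 ∧ q = f.2) ∨ (p = f.2 ∧ q = f.1)) :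
    ‖e.1 - e.2‖ ^ 2 + ‖f.1 - f.2‖ ^ 2 ≤ ‖e.1 - p‖ ^ 2 + ‖e.2 - q‖ ^ 2 := by
  classical
  obtain ⟨hne1, hne2, hne3, hne4⟩ := endpoints_ne hM he hf hef
  have hab : e.1 ≠ e.2 := (hM.1 e he).2.2
  have hcd : f.1 ≠ f.2 := (hM.1 f hf).2.2
  have hpf : p = f.1 ∨ p = f.2 := by rcases hpq with ⟨h1, _⟩ | ⟨h1, _⟩ <;> [exact Or.inl h1; exact Or.inr h1]
  have hqf : q = f.1 ∨ q = f.2 := by rcases hpq with ⟨_, h2⟩ | ⟨_, h2⟩ <;> [exact Or.inr h2; exact Or.inl h2]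
  have hap : e.1 ≠ p := by rcases hpf with h | h <;> rw [h] <;> assumption
  have haq : e.1 ≠ q := by rcases hqf with h | h <;> rw [h] <;> assumption
  have hbp : e.2 ≠ p := by rcases hpf with h | h <;> rw [h] <;> assumption
  have hbq : e.2 ≠ q := by rcases hqf with h | h <;> rw [h] <;> assumption
  have hpX : p ∈ X := by rcases hpf with h | h <;> rw [h]; exacts [(hM.1 f hf).1, (hM.1 f hf).2.1]
  have hqX : q ∈ X := by rcases hqf with h | h <;> rw [h]; exacts [(hM.1 f hf).1, (hM.1 f hf).2.1]
  have hpqne : p ≠ q := by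
    rcases hpq with ⟨rfl, rfl⟩ | ⟨rfl, rfl⟩
    exacts [hcd, hcd.symm]
  set M₀ := (M.erase e).erase f with hM₀
  set M' := insert (e.1, p) (insert (e.2, q) M₀) with hM'
  -- characterize membership in M₀ and M'
  have hM₀mem : ∀ g, g ∈ M₀ ↔ (g ∈ M ∧ g ≠ e ∧ g ≠ f) := by
    intro g; simp [hM₀, Finset.mem_erase]; tauto
  have hM'mem : ∀ g, g ∈ M' ↔ (g = (e.1, p) ∨ g = (e.2, q) ∨ (g ∈ M ∧ g ≠ e ∧ g ≠ f)) := by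
    intro g; simp [hM', Finset.mem_insert, hM₀mem]
  -- an edge of M containing one of e.1, e.2, p, q must be e or f
  have hMe : ∀ g ∈ M, (e.1 = g.1 ∨ e.1 = g.2) ∨ (e.2 = g.1 ∨ e.2 = g.2) → g = e := by
    intro g hg hx
    obtain ⟨g', _, hu⟩ := hM.2 (if e.1 = g.1 ∨ e.1 = g.2 then e.1 else e.2)
      (by split <;> [exact (hM.1 e he).1; exact (hM.1 e he).2.1])
    rcases hx with hx | hx
    · rw [if_pos hx] at hu
      exact (hu g ⟨hg, hx⟩).trans (hu e ⟨he, Or.inl rfl⟩).symm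
    · by_cases h1 : e.1 = g.1 ∨ e.1 = g.2
      · rw [if_pos h1] at hu
        exact (hu g ⟨hg, h1⟩).trans (hu e ⟨he, Or.inl rfl⟩).symm
      · rw [if_neg h1] at hu
        exact (hu g ⟨hg, hx⟩).trans (hu e ⟨he, Or.inr rfl⟩).symm
  have hMf : ∀ g ∈ M, (f.1 = g.1 ∨ f.1 = g.2) ∨ (f.2 = g.1 ∨ f.2 = g.2) → g = f := by
    intro g hg hx
    rcases hx with hx | hx
    · obtain ⟨g', _, hu⟩ := hM.2 f.1 (hM.1 f hf).1
      exact (hu g ⟨hg, hx⟩).trans (hu f ⟨hf, Or.inl rfl⟩).symm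
    · obtain ⟨g', _, hu⟩ := hM.2 f.2 (hM.1 f hf).2.1
      exact (hu g ⟨hg, hx⟩).trans (hu f ⟨hf, Or.inr rfl⟩).symm
  -- M' is a perfect matching
  have hM'pm : IsPerfectMatching X M' := by
    constructor
    · intro g hg
      rcases (hM'mem g).1 hg with rfl | rfl | ⟨hgM, _, _⟩
      · exact ⟨(hM.1 e he).1, hpX, hap⟩
      · exact ⟨(hM.1 e he).2.1, hqX, hbq⟩
      · exact hM.1 g hgM
    · intro x hx
      obtain ⟨g, ⟨hgM, hgx⟩, hu⟩ := hM.2 x hx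
      by_cases hge : g = e
      · subst hge
        rcases hgx with rfl | rfl
        · refine ⟨(g.1, p), ⟨(hM'mem _).2 (Or.inl rfl), Or.inl rfl⟩, ?_⟩
          rintro h ⟨hhM', hhx⟩
          rcases (hM'mem h).1 hhM' with rfl | rfl | ⟨hhM, hhe, hhf⟩
          · rfl
          · simp only [] at hhx
            rcases hhx with h1 | h1
            · exact absurd h1 hab
            · exact absurd h1 haq
          · exact absurd (hMe h hhM (Or.inl (by tauto))) hhe
        · refine ⟨(g.2, q), ⟨(hM'mem _).2 (Or.inr (Or.inl rfl)), Or.inl rfl⟩, ?_⟩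
          rintro h ⟨hhM', hhx⟩
          rcases (hM'mem h).1 hhM' with rfl | rfl | ⟨hhM, hhe, hhf⟩
          · simp only [] at hhx
            rcases hhx with h1 | h1
            · exact absurd h1.symm hab
            · exact absurd h1 hbp
          · rfl
          · exact absurd (hMe h hhM (Or.inr (by tauto))) hhe
      · by_cases hgf : g = f
        · subst hgf
          -- x = g.1 or g.2, i.e. x = p or x = q
          have hxpq : x = p ∨ x = q := by
            rcases hpq with ⟨rfl, rfl⟩ | ⟨rfl, rfl⟩ <;> tauto
          rcases hxpq with rfl | rfl
          · refine ⟨(e.1, x), ⟨(hM'mem _).2 (Or.inl rfl), Or.inr rfl⟩, ?_⟩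
            rintro h ⟨hhM', hhx⟩
            rcases (hM'mem h).1 hhM' with rfl | rfl | ⟨hhM, hhe, hhf⟩
            · rfl
            · simp only [] at hhx
              rcases hhx with h1 | h1
              · exact absurd h1.symm hbp
              · exact absurd h1 hpqne
            · refine absurd (hMf h hhM ?_) hhf
              rcases hpf with h2 | h2 <;> subst h2 <;> tauto
          · refine ⟨(e.2, x), ⟨(hM'mem _).2 (Or.inr (Or.inl rfl)), Or.inr rfl⟩, ?_⟩
            rintro h ⟨hhM', hhx⟩
            rcases (hM'mem h).1 hhM' with rfl | rfl | ⟨hhM, hhe, hhf⟩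
            · simp only [] at hhx
              rcases hhx with h1 | h1
              · exact absurd h1.symm haq
              · exact absurd h1.symm hpqne
            · rfl
            · refine absurd (hMf h hhM ?_) hhf
              rcases hqf with h2 | h2 <;> subst h2 <;> tauto
        · -- x not in {e.1,e.2,p,q}
          refine ⟨g, ⟨(hM'mem g).2 (Or.inr (Or.inr ⟨hgM, hge, hgf⟩)), hgx⟩, ?_⟩
          rintro h ⟨hhM', hhx⟩
          rcases (hM'mem h).1 hhM' with rfl | rfl | ⟨hhM, hhe, hhf⟩
          · exfalso
            simp only [] at hhx
            rcases hhx with h1 | h1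
            · exact hge (hu e ⟨he, Or.inl h1⟩).symm
            · refine hgf (hu f ⟨hf, ?_⟩).symm
              rcases hpf with h2 | h2 <;> rw [h2] at h1 <;> tauto
          · exfalso
            simp only [] at hhx
            rcases hhx with h1 | h1
            · exact hge (hu e ⟨he, Or.inr h1⟩).symm
            · refine hgf (hu f ⟨hf, ?_⟩).symm
              rcases hqf with h2 | h2 <;> rw [h2] at h1 <;> tauto
          · exact hu h ⟨hhM, hhx⟩
  -- now compare the sums
  have hsum := hmin M' hM'pm
  have hsplitM : ∑ g ∈ M, ‖g.1 - g.2‖ ^ 2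
      = ‖e.1 - e.2‖ ^ 2 + ‖f.1 - f.2‖ ^ 2 + ∑ g ∈ M₀, ‖g.1 - g.2‖ ^ 2 := by
    have hfE : f ∈ M.erase e := Finset.mem_erase.2 ⟨fun h => hef h.symm, hf⟩
    rw [← Finset.insert_erase he, Finset.sum_insert (Finset.notMem_erase e M),
      ← Finset.insert_erase hfE, Finset.sum_insert (Finset.notMem_erase f _)]
    ring
  have hnm1 : (e.1, p) ∉ insert (e.2, q) M₀ := by
    simp only [Finset.mem_insert, hM₀mem]
    rintro (h | ⟨hmem, -, -⟩)
    · exact hab (congrArg Prod.fst h)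
    · exact hbp (congrArg Prod.snd (hMe _ hmem (Or.inl (Or.inl rfl)))).symm
  have hnm2 : (e.2, q) ∉ M₀ := by
    rw [hM₀mem]
    rintro ⟨hmem, -, -⟩
    have := hMe _ hmem (Or.inr (Or.inl rfl))
    exact hab (congrArg Prod.fst this).symm
  have hsplitM' : ∑ g ∈ M', ‖g.1 - g.2‖ ^ 2
      = ‖e.1 - p‖ ^ 2 + ‖e.2 - q‖ ^ 2 + ∑ g ∈ M₀, ‖g.1 - g.2‖ ^ 2 := by
    rw [hM', Finset.sum_insert hnm1, Finset.sum_insert hnm2]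
    ring
  rw [hsplitM, hsplitM'] at hsum
  linarith

end Aux

theorem matching_midpoint_dist (k : ℕ) (X : Finset (EuclideanSpace ℝ (Fin k)))
    (heven : Even X.card)
    (M : Finset (EuclideanSpace ℝ (Fin k) × EuclideanSpace ℝ (Fin k)))
    (hM : IsPerfectMatching X M)
    (hmin : ∀ M', IsPerfectMatching X M' →
      ∑ e ∈ M, ‖e.1 - e.2‖ ^ 2 ≤ ∑ e ∈ M', ‖e.1 - e.2‖ ^ 2)
    (e f : EuclideanSpace ℝ (Fin k) × EuclideanSpace ℝ (Fin k))
    (he : e ∈ M) (hf : f ∈ M) (hef : e ≠ f) :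
    (‖e.1 - e.2‖ ^ 2 + ‖f.1 - f.2‖ ^ 2) / 4 ≤
      ‖midpoint ℝ e.1 e.2 - midpoint ℝ f.1 f.2‖ ^ 2 := by
  obtain ⟨a, b⟩ := e
  obtain ⟨c, d⟩ := f
  simp only [] at *
  have h1 : ‖a - b‖ ^ 2 + ‖c - d‖ ^ 2 ≤ ‖a - c‖ ^ 2 + ‖b - d‖ ^ 2 :=
    swap_le hM hmin he hf hef (Or.inl ⟨rfl, rfl⟩)
  have h2 : ‖a - b‖ ^ 2 + ‖c - d‖ ^ 2 ≤ ‖a - d‖ ^ 2 + ‖b - c‖ ^ 2 :=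
    swap_le hM hmin he hf hef (Or.inr ⟨rfl, rfl⟩)
  have hmid : midpoint ℝ a b - midpoint ℝ c d = (1/2 : ℝ) • (a + b - c - d) := by
    simp [midpoint_eq_smul_add, smul_sub, smul_add]; module
  have hid : ‖a + b - c - d‖ ^ 2
      = ‖a - c‖ ^ 2 + ‖b - d‖ ^ 2 + ‖a - d‖ ^ 2 + ‖b - c‖ ^ 2
        - ‖a - b‖ ^ 2 - ‖c - d‖ ^ 2 := by
    simp only [← real_inner_self_eq_norm_sq]
    simp only [inner_sub_left, inner_sub_right, inner_add_left, inner_add_right,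
      real_inner_comm a b, real_inner_comm a c, real_inner_comm a d,
      real_inner_comm b c, real_inner_comm b d, real_inner_comm c d]
    ring
  rw [hmid, norm_smul]
  rw [mul_pow]
  have : ‖(1/2 : ℝ)‖ ^ 2 = 1/4 := by norm_num
  rw [this, hid]
  linarith
end

section
/- Let X be a finite subset of R^k of even size and let M be a perfect matching on X minimizing the sum of squared edge lengths. Then every point x of R^k is contained in at most k+1 of the open balls B_e, where B_e is the open ball of radius |e|/2 centered at the midpoint of edge e, for e ranging over the edges of M. -/
open scoped Classical RealInnerProductSpace
open Module Finset

/-!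
Translate so that `x` is the origin. A point lies in the open ball with diameter `ab` exactly
when `⟪a - x, b - x⟫ < 0` (Thales). For two edges `ab`, `cd` of a minimal matching, neither
rewiring `ac, bd` nor `ad, bc` is cheaper; expanding the squares, this bounds the cross inner
products by `⟪a - x, b - x⟫ + ⟪c - x, d - x⟫`, so the vectors `(a - x) + (b - x)`, one for each
edge whose ball contains `x`, have pairwise negative inner products. Rankin's bound finishes.
-/

section Rankin

variable {E : Type*} [NormedAddCommGroup E] [InnerProductSpace ℝ E]

lemma inner_starProjection_orthogonal_singleton (v u w : E) :
    ⟪(ℝ ∙ v)ᗮ.starProjection u, (ℝ ∙ v)ᗮ.starProjection w⟫ =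
      ⟪u, w⟫ - ⟪v, u⟫ * ⟪v, w⟫ / ‖v‖ ^ 2 := by
  rw [Submodule.inner_starProjection_left_eq_right,
    Submodule.starProjection_eq_self_iff.mpr (Submodule.starProjection_apply_mem _ w),
    Submodule.starProjection_orthogonal_val, Submodule.starProjection_singleton,
    inner_sub_right, real_inner_smul_right, real_inner_comm u v]
  simp only [RCLike.ofReal_real_eq_id, id]
  ring

lemma inner_starProjection_orthogonal_singleton_neg {v u w : E} (hu : ⟪v, u⟫ < 0)
    (hw : ⟪v, w⟫ < 0) (huw : ⟪u, w⟫ < 0) :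
    ⟪(ℝ ∙ v)ᗮ.starProjection u, (ℝ ∙ v)ᗮ.starProjection w⟫ < 0 := by
  have : 0 ≤ ⟪v, u⟫ * ⟪v, w⟫ / ‖v‖ ^ 2 :=
    div_nonneg (mul_nonneg_of_nonpos_of_nonpos hu.le hw.le) (sq_nonneg _)
  rw [inner_starProjection_orthogonal_singleton]
  linarith

variable {ι : Type*} {s : Finset ι} {v : ι → E}

lemma card_le_one_of_inner_neg_of_eq_zero (hv : (s : Set ι).Pairwise fun i j => ⟪v i, v j⟫ < 0)
    {i₀ : ι} (hi₀ : i₀ ∈ s) (hv₀ : v i₀ = 0) : #s ≤ 1 := by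
  have hs : ∀ j ∈ s, j = i₀ := fun j hj => by
    by_contra hji
    simpa [hv₀] using hv hi₀ hj (Ne.symm hji)
  exact card_le_one.mpr fun i hi j hj => (hs i hi).trans (hs j hj).symm

theorem card_le_finrank_add_one_of_inner_neg [FiniteDimensional ℝ E]
    (hv : (s : Set ι).Pairwise fun i j => ⟪v i, v j⟫ < 0) : #s ≤ finrank ℝ E + 1 := by
  obtain ⟨n, hn⟩ : ∃ n, finrank ℝ E = n := ⟨_, rfl⟩
  induction n generalizing E s with
  | zero =>
    have : Subsingleton E := finrank_zero_iff.mp hn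
    rcases s.eq_empty_or_nonempty with rfl | ⟨i₀, hi₀⟩
    · simp
    exact (card_le_one_of_inner_neg_of_eq_zero hv hi₀ (Subsingleton.elim _ _)).trans (by omega)
  | succ n ih =>
    rcases s.eq_empty_or_nonempty with rfl | ⟨i₀, hi₀⟩
    · simp
    by_cases hv₀ : v i₀ = 0
    · exact (card_le_one_of_inner_neg_of_eq_zero hv hi₀ hv₀).trans (by omega)
    have : Fact (finrank ℝ E = n + 1) := ⟨hn⟩
    set K := (ℝ ∙ v i₀)ᗮ
    have hK : finrank ℝ K = n := Submodule.finrank_orthogonal_span_singleton hv₀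
    have hproj : (s.erase i₀ : Set ι).Pairwise fun i j =>
        ⟪K.orthogonalProjectionOnto (v i), K.orthogonalProjectionOnto (v j)⟫ < 0 := by
      intro i hi j hj hij
      rw [Submodule.coe_inner, Submodule.coe_orthogonalProjectionOnto_apply,
        Submodule.coe_orthogonalProjectionOnto_apply]
      exact inner_starProjection_orthogonal_singleton_neg
        (hv hi₀ (mem_of_mem_erase hi) (ne_of_mem_erase hi).symm)
        (hv hi₀ (mem_of_mem_erase hj) (ne_of_mem_erase hj).symm)
        (hv (mem_of_mem_erase hi) (mem_of_mem_erase hj) hij)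
    have := ih hproj hK
    rw [← card_erase_add_one hi₀]
    omega

end Rankin

section Geometry

variable {E : Type*} [NormedAddCommGroup E] [InnerProductSpace ℝ E]

lemma norm_sub_midpoint_sq (a b x : E) :
    ‖x - midpoint ℝ a b‖ ^ 2 = (‖a - b‖ / 2) ^ 2 + ⟪a - x, b - x⟫ := by
  have hm : x - midpoint ℝ a b = (-(1 / 2 : ℝ)) • ((a - x) + (b - x)) := by
    rw [midpoint_eq_smul_add, invOf_eq_inv]
    module
  have hab : a - b = (a - x) - (b - x) := (sub_sub_sub_cancel_right a b x).symm
  rw [hm, hab, norm_smul, mul_pow, norm_add_sq_real, div_pow, norm_sub_sq_real (a - x),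
    norm_neg, Real.norm_of_nonneg (by norm_num)]
  ring

lemma inner_sub_sub_neg_of_norm_sub_midpoint_lt {a b x : E}
    (h : ‖x - midpoint ℝ a b‖ < ‖a - b‖ / 2) : ⟪a - x, b - x⟫ < 0 := by
  have := pow_lt_pow_left₀ h (norm_nonneg _) two_ne_zero
  rw [norm_sub_midpoint_sq] at this
  linarith

lemma inner_add_add_neg_of_le_exchange {u₁ u₂ w₁ w₂ : E} (hu : ⟪u₁, u₂⟫ < 0) (hw : ⟪w₁, w₂⟫ < 0)
    (h₁ : ‖u₁ - u₂‖ ^ 2 + ‖w₁ - w₂‖ ^ 2 ≤ ‖u₁ - w₁‖ ^ 2 + ‖u₂ - w₂‖ ^ 2)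
    (h₂ : ‖u₁ - u₂‖ ^ 2 + ‖w₁ - w₂‖ ^ 2 ≤ ‖u₁ - w₂‖ ^ 2 + ‖u₂ - w₁‖ ^ 2) :
    ⟪u₁ + u₂, w₁ + w₂⟫ < 0 := by
  simp only [norm_sub_sq_real] at h₁ h₂
  simp only [inner_add_left, inner_add_right]
  linarith

end Geometry

lemma Equiv.swap_apply_mem_iff {α : Type*} [DecidableEq α] {s : Finset α} {a b : α}
    (ha : a ∈ s) (hb : b ∈ s) (y : α) : Equiv.swap a b y ∈ s ↔ y ∈ s := by
  rcases eq_or_ne y a with rfl | hya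
  · simp [ha, hb]
  rcases eq_or_ne y b with rfl | hyb
  · simp [ha, hb]
  rw [Equiv.swap_apply_of_ne_of_ne hya hyb]

noncomputable def matchingCost {k : ℕ}
    (M : Finset (EuclideanSpace ℝ (Fin k) × EuclideanSpace ℝ (Fin k))) : ℝ :=
  ∑ e ∈ M, ‖e.1 - e.2‖ ^ 2

namespace IsPerfectMatching

variable {k : ℕ} {X : Finset (EuclideanSpace ℝ (Fin k))}
  {M : Finset (EuclideanSpace ℝ (Fin k) × EuclideanSpace ℝ (Fin k))}

lemma eq_of_mem (hM : IsPerfectMatching X M)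
    {e f : EuclideanSpace ℝ (Fin k) × EuclideanSpace ℝ (Fin k)} {y : EuclideanSpace ℝ (Fin k)}
    (he : e ∈ M) (hf : f ∈ M)
    (hye : y = e.1 ∨ y = e.2) (hyf : y = f.1 ∨ y = f.2) : e = f := by
  have hyX : y ∈ X := by
    rcases hye with rfl | rfl
    exacts [(hM.1 e he).1, (hM.1 e he).2.1]
  exact (hM.2 y hyX).unique ⟨he, hye⟩ ⟨hf, hyf⟩

lemma map_perm (hM : IsPerfectMatching X M) (σ : Equiv.Perm (EuclideanSpace ℝ (Fin k)))
    (hσ : ∀ y, σ y ∈ X ↔ y ∈ X) :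
    IsPerfectMatching X (M.map (σ.prodCongr σ).toEmbedding) := by
  constructor
  · simp only [mem_map, Equiv.coe_toEmbedding, Equiv.prodCongr_apply, forall_exists_index,
      and_imp]
    rintro _ e he rfl
    obtain ⟨h₁, h₂, h₁₂⟩ := hM.1 e he
    exact ⟨(hσ _).mpr h₁, (hσ _).mpr h₂, σ.injective.ne h₁₂⟩
  · intro y hy
    obtain ⟨e, ⟨he, hye⟩, huniq⟩ := hM.2 (σ.symm y) ((hσ _).mp (by simpa using hy))
    refine ⟨σ.prodCongr σ e, ⟨mem_map_of_mem _ he, ?_⟩, ?_⟩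
    · simpa [Equiv.symm_apply_eq] using hye
    · simp only [mem_map, Equiv.coe_toEmbedding, and_imp, forall_exists_index]
      rintro _ f hf rfl hyf
      rw [huniq f ⟨hf, by simpa [Equiv.symm_apply_eq] using hyf⟩]

variable {a b c d : EuclideanSpace ℝ (Fin k)}

lemma add_sq_le_of_perm (hM : IsPerfectMatching X M)
    (hmin : ∀ M', IsPerfectMatching X M' → matchingCost M ≤ matchingCost M')
    (hab : (a, b) ∈ M) (hcd : (c, d) ∈ M) (hne : (a, b) ≠ (c, d))
    (σ : Equiv.Perm (EuclideanSpace ℝ (Fin k))) (hσX : ∀ y, σ y ∈ X ↔ y ∈ X)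
    (hσ : ∀ y, y ≠ a → y ≠ b → y ≠ c → y ≠ d → σ y = y) :
    ‖a - b‖ ^ 2 + ‖c - d‖ ^ 2 ≤ ‖σ a - σ b‖ ^ 2 + ‖σ c - σ d‖ ^ 2 := by
  have hle := hmin _ (hM.map_perm σ hσX)
  simp only [matchingCost, sum_map, Equiv.coe_toEmbedding, Equiv.prodCongr_apply, Prod.map_fst,
    Prod.map_snd] at hle
  have hfix : ∀ e ∈ M, e ≠ (a, b) ∧ e ≠ (c, d) → ∀ y, y = e.1 ∨ y = e.2 → σ y = y := by
    rintro e he ⟨heab, hecd⟩ y hy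
    apply hσ <;> rintro rfl
    exacts [heab (hM.eq_of_mem he hab hy (.inl rfl)), heab (hM.eq_of_mem he hab hy (.inr rfl)),
      hecd (hM.eq_of_mem he hcd hy (.inl rfl)), hecd (hM.eq_of_mem he hcd hy (.inr rfl))]
  have hdiff := sum_eq_add_of_mem (f := fun e => ‖σ e.1 - σ e.2‖ ^ 2 - ‖e.1 - e.2‖ ^ 2)
    _ _ hab hcd hne fun e he hne' => by
      rw [hfix e he hne' e.1 (.inl rfl), hfix e he hne' e.2 (.inr rfl), sub_self]
  rw [sum_sub_distrib] at hdiff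
  linarith

lemma add_sq_le_of_exchange (hM : IsPerfectMatching X M)
    (hmin : ∀ M', IsPerfectMatching X M' → matchingCost M ≤ matchingCost M')
    (hab : (a, b) ∈ M) (hcd : (c, d) ∈ M) (hne : (a, b) ≠ (c, d)) :
    ‖a - b‖ ^ 2 + ‖c - d‖ ^ 2 ≤ ‖a - c‖ ^ 2 + ‖b - d‖ ^ 2 ∧
      ‖a - b‖ ^ 2 + ‖c - d‖ ^ 2 ≤ ‖a - d‖ ^ 2 + ‖b - c‖ ^ 2 := by
  obtain ⟨haX, hbX, hab'⟩ := hM.1 _ hab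
  obtain ⟨hcX, hdX, hcd'⟩ := hM.1 _ hcd
  have hac : a ≠ c := fun h => hne (hM.eq_of_mem hab hcd (.inl rfl) (.inl h))
  have had : a ≠ d := fun h => hne (hM.eq_of_mem hab hcd (.inl rfl) (.inr h))
  have hbc : b ≠ c := fun h => hne (hM.eq_of_mem hab hcd (.inr rfl) (.inl h))
  have hbd : b ≠ d := fun h => hne (hM.eq_of_mem hab hcd (.inr rfl) (.inr h))
  constructor
  · have := hM.add_sq_le_of_perm hmin hab hcd hne (Equiv.swap b c)
      (Equiv.swap_apply_mem_iff hbX hcX) fun y _ hyb hyc _ => Equiv.swap_apply_of_ne_of_ne hyb hyc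
    rwa [Equiv.swap_apply_of_ne_of_ne hab' hac, Equiv.swap_apply_left, Equiv.swap_apply_right,
      Equiv.swap_apply_of_ne_of_ne hbd.symm hcd'.symm] at this
  · have := hM.add_sq_le_of_perm hmin hab hcd hne (Equiv.swap b d)
      (Equiv.swap_apply_mem_iff hbX hdX) fun y _ hyb _ hyd => Equiv.swap_apply_of_ne_of_ne hyb hyd
    rwa [Equiv.swap_apply_of_ne_of_ne hab' had, Equiv.swap_apply_left, Equiv.swap_apply_right,
      Equiv.swap_apply_of_ne_of_ne hbc.symm hcd', norm_sub_rev c b] at this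

end IsPerfectMatching

theorem matching_balls_kplus1_fold_general (k : ℕ) (X : Finset (EuclideanSpace ℝ (Fin k)))
    (M : Finset (EuclideanSpace ℝ (Fin k) × EuclideanSpace ℝ (Fin k)))
    (hM : IsPerfectMatching X M)
    (hmin : ∀ M', IsPerfectMatching X M' →
      ∑ e ∈ M, ‖e.1 - e.2‖ ^ 2 ≤ ∑ e ∈ M', ‖e.1 - e.2‖ ^ 2)
    (x : EuclideanSpace ℝ (Fin k)) :
    (M.filter fun e => ‖x - midpoint ℝ e.1 e.2‖ < ‖e.1 - e.2‖ / 2).card ≤ k + 1 := by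
  set S := M.filter fun e => ‖x - midpoint ℝ e.1 e.2‖ < ‖e.1 - e.2‖ / 2
  have hobtuse : ∀ e ∈ S, ⟪e.1 - x, e.2 - x⟫ < 0 := fun e he =>
    inner_sub_sub_neg_of_norm_sub_midpoint_lt (mem_filter.mp he).2
  have hrankin := card_le_finrank_add_one_of_inner_neg (s := S)
    (v := fun e => (e.1 - x) + (e.2 - x)) fun e he f hf hef => by
      obtain ⟨h₁, h₂⟩ :=
        hM.add_sq_le_of_exchange hmin (mem_filter.mp he).1 (mem_filter.mp hf).1 hef
      exact inner_add_add_neg_of_le_exchange (hobtuse e he) (hobtuse f hf)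
        (by simpa only [sub_sub_sub_cancel_right] using h₁)
        (by simpa only [sub_sub_sub_cancel_right] using h₂)
  rwa [finrank_euclideanSpace_fin] at hrankin

theorem matching_balls_kplus1_fold (k : ℕ) (X : Finset (EuclideanSpace ℝ (Fin k)))
    (heven : Even X.card)
    (M : Finset (EuclideanSpace ℝ (Fin k) × EuclideanSpace ℝ (Fin k)))
    (hM : IsPerfectMatching X M)
    (hmin : ∀ M', IsPerfectMatching X M' →
      ∑ e ∈ M, ‖e.1 - e.2‖ ^ 2 ≤ ∑ e ∈ M', ‖e.1 - e.2‖ ^ 2)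
    (x : EuclideanSpace ℝ (Fin k)) :
    (M.filter fun e => ‖x - midpoint ℝ e.1 e.2‖ < ‖e.1 - e.2‖ / 2).card ≤ k + 1 :=
  matching_balls_kplus1_fold_general k X M hM hmin x
end

section
/- Any set of n unit vectors in R^k such that every two distinct vectors have strictly negative inner product satisfies n <= k + 1. -/
open scoped RealInnerProductSpace
open Finset

lemma rankin_aux {E : Type*} [NormedAddCommGroup E] [InnerProductSpace ℝ E] {m : ℕ}
    (u : Fin m → E) (w : E) (h : ∀ i j, i ≠ j → ⟪u i, u j⟫ < 0)
    (hw : ∀ i, ⟪u i, w⟫ < 0) : LinearIndependent ℝ u := by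
  rw [Fintype.linearIndependent_iff]
  intro g hg
  set a : Fin m → ℝ := fun i => max (g i) 0 with ha
  set b : Fin m → ℝ := fun i => max (-g i) 0 with hb
  have hab : ∀ i, g i = a i - b i := fun i => (max_zero_sub_eq_self (g i)).symm
  have ha0 : ∀ i, 0 ≤ a i := fun i => le_max_right _ _
  have hb0 : ∀ i, 0 ≤ b i := fun i => le_max_right _ _
  have habz : ∀ i, a i * b i = 0 := by
    intro i
    rcases le_total (g i) 0 with hle | hle
    · have : a i = 0 := max_eq_right hle
      simp [this]
    · have : b i = 0 := max_eq_right (by linarith)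
      simp [this]
  have key : ∑ i, a i • u i = ∑ i, b i • u i := by
    have h1 : ∑ i, (a i - b i) • u i = 0 := by
      rw [← hg]; exact Finset.sum_congr rfl fun i _ => by rw [← hab]
    have h2 : ∑ i, a i • u i - ∑ i, b i • u i = 0 := by
      rw [← Finset.sum_sub_distrib]
      simpa [sub_smul] using h1
    exact sub_eq_zero.mp h2
  have hinner : ⟪∑ i, a i • u i, ∑ i, a i • u i⟫ = ∑ i, ∑ j, a i * (b j * ⟪u i, u j⟫) := by
    nth_rewrite 2 [key]
    rw [sum_inner]
    refine Finset.sum_congr rfl fun i _ => ?_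
    rw [real_inner_smul_left, inner_sum]
    rw [Finset.mul_sum]
    refine Finset.sum_congr rfl fun j _ => ?_
    rw [real_inner_smul_right]
  have hle : ⟪∑ i, a i • u i, ∑ i, a i • u i⟫ ≤ 0 := by
    rw [hinner]
    apply Finset.sum_nonpos
    intro i _
    apply Finset.sum_nonpos
    intro j _
    rcases eq_or_ne i j with rfl | hij
    · rw [← mul_assoc, habz i]; simp
    · have := h i j hij
      have : b j * ⟪u i, u j⟫ ≤ 0 := mul_nonpos_of_nonneg_of_nonpos (hb0 j) this.le
      exact mul_nonpos_of_nonneg_of_nonpos (ha0 i) this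
  have hx0 : ∑ i, a i • u i = 0 := by
    have := real_inner_self_nonneg (x := ∑ i, a i • u i)
    exact inner_self_eq_zero.mp (le_antisymm hle this)
  have haz : ∀ i, a i = 0 := by
    have hsum : ∑ i, a i * ⟪u i, w⟫ = 0 := by
      have : ⟪∑ i, a i • u i, w⟫ = ∑ i, a i * ⟪u i, w⟫ := by
        rw [sum_inner]
        exact Finset.sum_congr rfl fun i _ => real_inner_smul_left _ _ _
      rw [hx0] at this
      simpa using this.symm
    intro i
    have hterm : ∀ j ∈ Finset.univ, a j * ⟪u j, w⟫ ≤ 0 := fun j _ =>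
      mul_nonpos_of_nonneg_of_nonpos (ha0 j) (hw j).le
    have := (Finset.sum_eq_zero_iff_of_nonpos hterm).mp hsum i (Finset.mem_univ i)
    rcases mul_eq_zero.mp this with h' | h'
    · exact h'
    · exact absurd h' (hw i).ne
  have hbz : ∀ i, b i = 0 := by
    have hsum : ∑ i, b i * ⟪u i, w⟫ = 0 := by
      have : ⟪∑ i, a i • u i, w⟫ = ∑ i, b i * ⟪u i, w⟫ := by
        rw [key, sum_inner]
        exact Finset.sum_congr rfl fun i _ => real_inner_smul_left _ _ _
      rw [hx0] at this
      simpa using this.symm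
    intro i
    have hterm : ∀ j ∈ Finset.univ, b j * ⟪u j, w⟫ ≤ 0 := fun j _ =>
      mul_nonpos_of_nonneg_of_nonpos (hb0 j) (hw j).le
    have := (Finset.sum_eq_zero_iff_of_nonpos hterm).mp hsum i (Finset.mem_univ i)
    rcases mul_eq_zero.mp this with h' | h'
    · exact h'
    · exact absurd h' (hw i).ne
  intro i
  rw [hab i, haz i, hbz i, sub_zero]

theorem rankin_bound (k n : ℕ) (v : Fin n → EuclideanSpace ℝ (Fin k))
    (hunit : ∀ i, ‖v i‖ = 1)
    (hneg : ∀ i j, i ≠ j → ⟪v i, v j⟫ < 0) :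
    n ≤ k + 1 := by
  cases n with
  | zero => omega
  | succ m =>
    have li : LinearIndependent ℝ (fun i : Fin m => v i.castSucc) := by
      apply rankin_aux _ (v (Fin.last m))
      · intro i j hij
        exact hneg _ _ (fun hc => hij (Fin.castSucc_injective m hc))
      · intro i
        exact hneg _ _ (Fin.castSucc_lt_last i).ne
    have := li.fintype_card_le_finrank
    simp [finrank_euclideanSpace_fin] at this
    omega
end

section
/- Let X be a finite subset of R^k and let H be a Hamiltonian cycle on X minimizing the sum of squared edge lengths among all Hamiltonian cycles on X. Then for any four edges e_1, e_2, e_3, e_4 of H, listed in the cyclic order in which they appear along H, the sum |m_1 - m_3|^2 + |m_2 - m_4|^2 is at least (|e_1|^2 + |e_2|^2 + |e_3|^2 + |e_4|^2)/4, where m_i denotes the midpoint of e_i. -/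
/-!
Write `eᵢ = aᵢbᵢ`. Comparing `H` with the two 2-opt moves that reroute `e₁, e₃` and `e₂, e₄`
gives `|e₁|² + |e₃|² ≤ |a₁ - a₃|² + |b₁ - b₃|²` and `|e₂|² + |e₄|² ≤ |a₂ - a₄|² + |b₂ - b₄|²`;
comparing it with the move that exchanges the segments between `e₁, e₂` and between `e₃, e₄`,
which replaces the four edges by `a₁b₃, a₃b₁, a₂b₄, a₄b₂`, gives
`∑ |eᵢ|² ≤ |a₁ - b₃|² + |a₃ - b₁|² + |a₂ - b₄|² + |a₄ - b₂|²`. Adding the identities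
`4 |m₁ - m₃|² = |a₁ - a₃|² + |b₁ - b₃|² + |a₁ - b₃|² + |a₃ - b₁|² - |e₁|² - |e₃|²`
(and the same for `2, 4`) yields `4 (|m₁ - m₃|² + |m₂ - m₄|²) ≥ ∑ |eᵢ|²`.
-/

/-- Cyclic successor on `Fin n`. -/
def nxt {n : ℕ} (i : Fin n) : Fin n := ⟨(i.val + 1) % n, Nat.mod_lt _ i.pos⟩

/-- `f` is a Hamiltonian cycle on the finite set `X`: a cyclic ordering of the points
of `X`, i.e. an injective enumeration of `X` by `Fin X.card`; its edges join `f i`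
and `f (nxt i)`. -/
def IsHamCycle {k : ℕ} (X : Finset (EuclideanSpace ℝ (Fin k)))
    (f : Fin X.card → EuclideanSpace ℝ (Fin k)) : Prop :=
  Function.Injective f ∧ ∀ x, x ∈ X ↔ ∃ i, f i = x

open Finset

lemma nxt_val {n : ℕ} (i : Fin n) : (nxt i).val = if i.val + 1 = n then 0 else i.val + 1 := by
  have := i.isLt
  show (i.val + 1) % n = _
  split_ifs with h
  · rw [h, Nat.mod_self]
  · exact Nat.mod_eq_of_lt (by omega)

lemma IsHamCycle.comp_perm {k : ℕ} {X : Finset (EuclideanSpace ℝ (Fin k))}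
    {f : Fin X.card → EuclideanSpace ℝ (Fin k)} (hf : IsHamCycle X f)
    (σ : Equiv.Perm (Fin X.card)) : IsHamCycle X (f ∘ σ) :=
  ⟨hf.1.comp σ.injective, fun x => (hf.2 x).trans σ.surjective.exists⟩

def reflectIcc {n : ℕ} (a b : ℕ) (hb : b < n) : Equiv.Perm (Fin n) :=
  Function.Involutive.toPerm
    (fun t => ⟨if a ≤ t.val ∧ t.val ≤ b then a + b - t.val else t.val, by split_ifs <;> omega⟩)
    (fun t => Fin.ext (by dsimp only; split_ifs <;> omega))

lemma reflectIcc_val {n : ℕ} (a b : ℕ) (hb : b < n) (t : Fin n) :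
    (reflectIcc a b hb t).val = if a ≤ t.val ∧ t.val ≤ b then a + b - t.val else t.val :=
  rfl

/-- Reorders the blocks `(p₁, p₂]`, `(p₂, p₃]`, `(p₃, p₄]` of `ℕ` as `(p₃, p₄]`, `(p₂, p₃]`,
`(p₁, p₂]`: position `t` of the new sequence holds `blockSwapNat p₁ p₂ p₃ p₄ t`. -/
def blockSwapNat (p₁ p₂ p₃ p₄ t : ℕ) : ℕ :=
  if t ≤ p₁ then t
  else if t ≤ p₁ + (p₄ - p₃) then t + (p₃ - p₁)
  else if t ≤ p₁ + (p₄ - p₂) then t + (p₂ + p₃) - (p₁ + p₄)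
  else if t ≤ p₄ then t - (p₄ - p₂)
  else t

noncomputable def blockSwap {n : ℕ} (p₁ p₂ p₃ p₄ : Fin n) (h₁₂ : p₁ ≤ p₂) (h₂₃ : p₂ ≤ p₃)
    (h₃₄ : p₃ ≤ p₄) : Equiv.Perm (Fin n) :=
  Equiv.ofBijective
    (fun t => ⟨blockSwapNat p₁ p₂ p₃ p₄ t, by
      have := p₄.isLt; have := t.isLt; unfold blockSwapNat; split_ifs <;> omega⟩)
    (Finite.injective_iff_bijective.mp fun s t hst => Fin.ext (by
      have : blockSwapNat p₁ p₂ p₃ p₄ s = blockSwapNat p₁ p₂ p₃ p₄ t := congrArg Fin.val hst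
      unfold blockSwapNat at this; split_ifs at this <;> omega))

lemma blockSwap_val {n : ℕ} (p₁ p₂ p₃ p₄ : Fin n) (h₁₂ : p₁ ≤ p₂) (h₂₃ : p₂ ≤ p₃)
    (h₃₄ : p₃ ≤ p₄) (t : Fin n) :
    (blockSwap p₁ p₂ p₃ p₄ h₁₂ h₂₃ h₃₄ t).val = blockSwapNat p₁ p₂ p₃ p₄ t :=
  rfl

def cycleCost {α : Type*} (w : α → α → ℝ) {n : ℕ} (g : Fin n → α) : ℝ :=
  ∑ i, w (g i) (g (nxt i))

section Rerouting

variable {α : Type*} {w : α → α → ℝ} {n : ℕ}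

lemma cycleCost_comp_add_sum (hw : ∀ x y, w x y = w y x) (g : Fin n → α)
    (σ ψ : Equiv.Perm (Fin n)) (S : Finset (Fin n))
    (h : ∀ i ∉ S, s(σ i, σ (nxt i)) = s(ψ i, nxt (ψ i))) :
    cycleCost w (g ∘ σ) + ∑ i ∈ S, w (g (ψ i)) (g (nxt (ψ i))) =
      cycleCost w g + ∑ i ∈ S, w (g (σ i)) (g (σ (nxt i))) := by
  have hout : ∑ i ∈ Sᶜ, w (g (σ i)) (g (σ (nxt i))) =
      ∑ i ∈ Sᶜ, w (g (ψ i)) (g (nxt (ψ i))) := by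
    refine sum_congr rfl fun i hi => ?_
    rcases Sym2.eq_iff.mp (h i (mem_compl.mp hi)) with ⟨h₁, h₂⟩ | ⟨h₁, h₂⟩
    · rw [h₁, h₂]
    · rw [h₁, h₂, hw]
  have hg : cycleCost w g = ∑ i, w (g (ψ i)) (g (nxt (ψ i))) :=
    (Equiv.sum_comp ψ fun j => w (g j) (g (nxt j))).symm
  rw [hg, cycleCost]
  simp only [Function.comp_apply]
  rw [← sum_compl_add_sum S, ← sum_compl_add_sum S, hout]
  ring

lemma cycleCost_comp_reflectIcc (hw : ∀ x y, w x y = w y x) (g : Fin n → α) {p q : Fin n}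
    (hpq : p < q) :
    cycleCost w (g ∘ reflectIcc (p.val + 1) q.val q.isLt) +
        (w (g p) (g (nxt p)) + w (g q) (g (nxt q))) =
      cycleCost w g + (w (g p) (g q) + w (g (nxt p)) (g (nxt q))) := by
  have hq := q.isLt
  set σ := reflectIcc (p.val + 1) q.val q.isLt
  -- The reversal maps the edge at position `i ∈ (p, q)` onto the edge at position `p + q - i`.
  set ψ := reflectIcc (p.val + 1) (q.val - 1) (by omega : q.val - 1 < n)
  have key := cycleCost_comp_add_sum hw g σ ψ {p, q} fun i hi => by
    simp only [mem_insert, mem_singleton, not_or, Fin.ext_iff] at hi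
    have := i.isLt
    rw [Sym2.eq_iff]
    simp only [Fin.ext_iff, σ, ψ, reflectIcc_val, nxt_val]
    split_ifs <;> omega
  have e₁ : ψ p = p := Fin.ext (by simp only [ψ, reflectIcc_val]; split_ifs <;> omega)
  have e₂ : ψ q = q := Fin.ext (by simp only [ψ, reflectIcc_val]; split_ifs <;> omega)
  have f₁ : σ p = p := Fin.ext (by simp only [σ, reflectIcc_val]; split_ifs <;> omega)
  have f₂ : σ (nxt p) = q :=
    Fin.ext (by simp only [σ, reflectIcc_val, nxt_val]; split_ifs <;> omega)
  have f₃ : σ q = nxt p :=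
    Fin.ext (by simp only [σ, reflectIcc_val, nxt_val]; split_ifs <;> omega)
  have f₄ : σ (nxt q) = nxt q :=
    Fin.ext (by simp only [σ, reflectIcc_val, nxt_val]; split_ifs <;> omega)
  rwa [sum_pair (Fin.ne_of_lt hpq), sum_pair (Fin.ne_of_lt hpq), e₁, e₂, f₁, f₂, f₃, f₄] at key

lemma cycleCost_comp_blockSwap (hw : ∀ x y, w x y = w y x) (g : Fin n → α)
    {p₁ p₂ p₃ p₄ : Fin n} (h₁₂ : p₁ < p₂) (h₂₃ : p₂ < p₃) (h₃₄ : p₃ < p₄) :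
    cycleCost w (g ∘ blockSwap p₁ p₂ p₃ p₄ h₁₂.le h₂₃.le h₃₄.le) +
        (w (g p₁) (g (nxt p₁)) + w (g p₂) (g (nxt p₂)) + w (g p₃) (g (nxt p₃)) +
          w (g p₄) (g (nxt p₄))) =
      cycleCost w g + (w (g p₁) (g (nxt p₃)) + w (g p₂) (g (nxt p₄)) + w (g p₃) (g (nxt p₁)) +
          w (g p₄) (g (nxt p₂))) := by
  have := p₄.isLt
  set σ := blockSwap p₁ p₂ p₃ p₄ h₁₂.le h₂₃.le h₃₄.le
  -- `m₂` and `m₃` are the new positions of the ends of the blocks `(p₃, p₄]` and `(p₂, p₃]`.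
  set m₂ : Fin n := ⟨p₁ + (p₄ - p₃), by omega⟩
  set m₃ : Fin n := ⟨p₁ + (p₄ - p₂), by omega⟩
  have key := cycleCost_comp_add_sum hw g σ σ {p₁, m₂, m₃, p₄} fun i hi => by
    simp only [mem_insert, mem_singleton, not_or, Fin.ext_iff] at hi
    have := i.isLt
    congr 1
    simp only [Fin.ext_iff, σ, blockSwap_val, nxt_val, blockSwapNat, m₂, m₃] at hi ⊢
    split_ifs <;> omega
  have e₁ : σ p₁ = p₁ :=
    Fin.ext (by simp only [σ, blockSwap_val, blockSwapNat]; split_ifs <;> omega)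
  have e₂ : σ m₂ = p₄ :=
    Fin.ext (by simp only [σ, m₂, blockSwap_val, blockSwapNat]; split_ifs <;> omega)
  have e₃ : σ m₃ = p₃ :=
    Fin.ext (by simp only [σ, m₃, blockSwap_val, blockSwapNat]; split_ifs <;> omega)
  have e₄ : σ p₄ = p₂ :=
    Fin.ext (by simp only [σ, blockSwap_val, blockSwapNat]; split_ifs <;> omega)
  have f₁ : σ (nxt p₁) = nxt p₃ :=
    Fin.ext (by simp only [σ, blockSwap_val, blockSwapNat, nxt_val]; split_ifs <;> omega)
  have f₂ : σ (nxt m₂) = nxt p₂ :=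
    Fin.ext (by simp only [σ, m₂, blockSwap_val, blockSwapNat, nxt_val]; split_ifs <;> omega)
  have f₃ : σ (nxt m₃) = nxt p₁ :=
    Fin.ext (by simp only [σ, m₃, blockSwap_val, blockSwapNat, nxt_val]; split_ifs <;> omega)
  have f₄ : σ (nxt p₄) = nxt p₄ :=
    Fin.ext (by simp only [σ, blockSwap_val, blockSwapNat, nxt_val]; split_ifs <;> omega)
  have d₁ : p₁ ∉ ({m₂, m₃, p₄} : Finset (Fin n)) := by
    simp only [mem_insert, mem_singleton, Fin.ext_iff, m₂, m₃]; omega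
  have d₂ : m₂ ∉ ({m₃, p₄} : Finset (Fin n)) := by
    simp only [mem_insert, mem_singleton, Fin.ext_iff, m₂, m₃]; omega
  have d₃ : m₃ ≠ p₄ := by simp only [ne_eq, Fin.ext_iff, m₃]; omega
  simp only [sum_insert d₁, sum_insert d₂, sum_pair d₃, e₁, e₂, e₃, e₄, f₁, f₂, f₃, f₄] at key
  linarith

end Rerouting

def IsOptimalOrder {α : Type*} (w : α → α → ℝ) {n : ℕ} (g : Fin n → α) : Prop :=
  ∀ σ : Equiv.Perm (Fin n), cycleCost w g ≤ cycleCost w (g ∘ σ)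

namespace IsOptimalOrder

variable {α : Type*} {w : α → α → ℝ} {n : ℕ} {g : Fin n → α}

lemma edge_add_edge_le (hg : IsOptimalOrder w g) (hw : ∀ x y, w x y = w y x) {p q : Fin n}
    (hpq : p < q) :
    w (g p) (g (nxt p)) + w (g q) (g (nxt q)) ≤ w (g p) (g q) + w (g (nxt p)) (g (nxt q)) := by
  have := cycleCost_comp_reflectIcc hw g hpq
  linarith [hg (reflectIcc (p.val + 1) q.val q.isLt)]

lemma four_edges_le (hg : IsOptimalOrder w g) (hw : ∀ x y, w x y = w y x)
    {p₁ p₂ p₃ p₄ : Fin n} (h₁₂ : p₁ < p₂) (h₂₃ : p₂ < p₃) (h₃₄ : p₃ < p₄) :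
    w (g p₁) (g (nxt p₁)) + w (g p₂) (g (nxt p₂)) + w (g p₃) (g (nxt p₃)) +
        w (g p₄) (g (nxt p₄)) ≤
      w (g p₁) (g (nxt p₃)) + w (g p₂) (g (nxt p₄)) + w (g p₃) (g (nxt p₁)) +
        w (g p₄) (g (nxt p₂)) := by
  have := cycleCost_comp_blockSwap hw g h₁₂ h₂₃ h₃₄
  linarith [hg (blockSwap p₁ p₂ p₃ p₄ h₁₂.le h₂₃.le h₃₄.le)]

end IsOptimalOrder

lemma four_mul_norm_midpoint_sub_midpoint_sq {E : Type*} [NormedAddCommGroup E]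
    [InnerProductSpace ℝ E] (A B C D : E) :
    4 * ‖midpoint ℝ A B - midpoint ℝ C D‖ ^ 2 =
      ‖A - C‖ ^ 2 + ‖B - D‖ ^ 2 + ‖A - D‖ ^ 2 + ‖C - B‖ ^ 2 - ‖A - B‖ ^ 2 - ‖C - D‖ ^ 2 := by
  have hm : midpoint ℝ A B - midpoint ℝ C D = (2 : ℝ)⁻¹ • ((A - C) + (B - D)) := by
    rw [midpoint_eq_smul_add, midpoint_eq_smul_add, invOf_eq_inv]
    module
  rw [hm, norm_smul, norm_inv, Real.norm_two, mul_pow, norm_add_sq_real]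
  simp only [norm_sub_sq_real, inner_sub_left, inner_sub_right]
  ring

theorem hamCycle_four_edges (k : ℕ) (X : Finset (EuclideanSpace ℝ (Fin k)))
    (f : Fin X.card → EuclideanSpace ℝ (Fin k)) (hf : IsHamCycle X f)
    (hmin : ∀ g : Fin X.card → EuclideanSpace ℝ (Fin k), IsHamCycle X g →
      ∑ i, ‖f i - f (nxt i)‖ ^ 2 ≤ ∑ i, ‖g i - g (nxt i)‖ ^ 2)
    (i₁ i₂ i₃ i₄ : Fin X.card) (h12 : i₁ < i₂) (h23 : i₂ < i₃) (h34 : i₃ < i₄) :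
    (‖f i₁ - f (nxt i₁)‖ ^ 2 + ‖f i₂ - f (nxt i₂)‖ ^ 2 + ‖f i₃ - f (nxt i₃)‖ ^ 2 +
        ‖f i₄ - f (nxt i₄)‖ ^ 2) / 4 ≤
      ‖midpoint ℝ (f i₁) (f (nxt i₁)) - midpoint ℝ (f i₃) (f (nxt i₃))‖ ^ 2 +
        ‖midpoint ℝ (f i₂) (f (nxt i₂)) - midpoint ℝ (f i₄) (f (nxt i₄))‖ ^ 2 := by
  have hw : ∀ x y : EuclideanSpace ℝ (Fin k), ‖x - y‖ ^ 2 = ‖y - x‖ ^ 2 := fun x y => by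
    rw [norm_sub_rev]
  have hopt : IsOptimalOrder (fun x y => ‖x - y‖ ^ 2) f := fun σ => hmin (f ∘ σ) (hf.comp_perm σ)
  have h₁₃ := hopt.edge_add_edge_le hw (h12.trans h23)
  have h₂₄ := hopt.edge_add_edge_le hw (h23.trans h34)
  have hswap := hopt.four_edges_le hw h12 h23 h34
  have m₁₃ := four_mul_norm_midpoint_sub_midpoint_sq (f i₁) (f (nxt i₁)) (f i₃) (f (nxt i₃))
  have m₂₄ := four_mul_norm_midpoint_sub_midpoint_sq (f i₂) (f (nxt i₂)) (f i₄) (f (nxt i₄))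
  linarith
end

section
/- For any subset X of [0,1]^k with at least 3 points, there exist two distinct points p, q in X with |p - q| <= sqrt(2k/3). -/
lemma normsq_eq {k : ℕ} (p q : EuclideanSpace ℝ (Fin k)) :
    ‖p - q‖ ^ 2 = ∑ i, (p i - q i) ^ 2 := by
  rw [EuclideanSpace.norm_eq, Real.sq_sqrt]
  · simp
  · positivity

lemma coord_bound {a b c : ℝ} (ha : a ∈ Set.Icc (0:ℝ) 1) (hb : b ∈ Set.Icc (0:ℝ) 1)
    (hc : c ∈ Set.Icc (0:ℝ) 1) :
    (a - b)^2 + (b - c)^2 + (a - c)^2 ≤ 2 := by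
  obtain ⟨ha0, ha1⟩ := ha; obtain ⟨hb0, hb1⟩ := hb; obtain ⟨hc0, hc1⟩ := hc
  nlinarith [mul_nonneg ha0 hb0, mul_nonneg hb0 hc0, mul_nonneg ha0 hc0,
    mul_nonneg (sub_nonneg.2 ha1) (sub_nonneg.2 hb1),
    mul_nonneg (sub_nonneg.2 hb1) (sub_nonneg.2 hc1),
    mul_nonneg (sub_nonneg.2 ha1) (sub_nonneg.2 hc1)]

lemma final {k : ℕ} (p q : EuclideanSpace ℝ (Fin k)) (h : ‖p - q‖ ^ 2 ≤ 2 * k / 3) :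
    ‖p - q‖ ≤ Real.sqrt (2 * k / 3) := by
  exact (Real.le_sqrt (norm_nonneg _) (by positivity)).mpr h

theorem two_close_points (k : ℕ) (X : Finset (EuclideanSpace ℝ (Fin k)))
    (hX : ∀ p ∈ X, ∀ i, p i ∈ Set.Icc (0 : ℝ) 1) (hcard : 3 ≤ X.card) :
    ∃ p ∈ X, ∃ q ∈ X, p ≠ q ∧ ‖p - q‖ ≤ Real.sqrt (2 * k / 3) := by
  classical
  -- extract three distinct points
  obtain ⟨p, hp⟩ := Finset.card_pos.mp (by omega : 0 < X.card)
  have h2 : 0 < (X.erase p).card := by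
    rw [Finset.card_erase_of_mem hp]; omega
  obtain ⟨q, hq⟩ := Finset.card_pos.mp h2
  have h3 : 0 < ((X.erase p).erase q).card := by
    rw [Finset.card_erase_of_mem hq, Finset.card_erase_of_mem hp]; omega
  obtain ⟨r, hr⟩ := Finset.card_pos.mp h3
  have hqX : q ∈ X := Finset.mem_of_mem_erase hq
  have hrX : r ∈ X := Finset.mem_of_mem_erase (Finset.mem_of_mem_erase hr)
  have hpq : p ≠ q := (Finset.ne_of_mem_erase hq).symm
  have hqr : q ≠ r := (Finset.ne_of_mem_erase hr).symm
  have hpr : p ≠ r := (Finset.ne_of_mem_erase (Finset.mem_of_mem_erase hr)).symm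
  have hsum : ‖p - q‖^2 + ‖q - r‖^2 + ‖p - r‖^2 ≤ 2 * k := by
    rw [normsq_eq, normsq_eq, normsq_eq, ← Finset.sum_add_distrib, ← Finset.sum_add_distrib]
    calc ∑ i, ((p i - q i)^2 + (q i - r i)^2 + (p i - r i)^2)
        ≤ ∑ _i : Fin k, (2:ℝ) := Finset.sum_le_sum fun i _ =>
          coord_bound (hX p hp i) (hX q hqX i) (hX r hrX i)
      _ = 2 * k := by simp [mul_comm]
  rcases le_or_gt (‖p - q‖^2) (2 * k / 3) with h | h
  · exact ⟨p, hp, q, hqX, hpq, final p q h⟩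
  rcases le_or_gt (‖q - r‖^2) (2 * k / 3) with h' | h'
  · exact ⟨q, hqX, r, hrX, hqr, final q r h'⟩
  have : ‖p - r‖^2 ≤ 2 * k / 3 := by linarith
  exact ⟨p, hp, r, hrX, hpr, final p r this⟩
end

section
/- Let X be a finite subset of R^k of even size, M a perfect matching on X minimizing the sum of squared edge lengths, t >= 1 an integer, and alpha = sqrt(t/(4(t+1))). Then every point of R^k is contained in at most t of the open balls of radius alpha*|e| centered at the midpoints of edges e of M. -/
open scoped Classical

open scoped RealInnerProductSpace

variable {E : Type*} [NormedAddCommGroup E] [InnerProductSpace ℝ E]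

lemma mid_ineq (a b c d : E)
    (h1 : ‖a-b‖^2 + ‖c-d‖^2 ≤ ‖a-c‖^2 + ‖b-d‖^2)
    (h2 : ‖a-b‖^2 + ‖c-d‖^2 ≤ ‖a-d‖^2 + ‖b-c‖^2) :
    (‖a-b‖^2 + ‖c-d‖^2) / 4 ≤ ‖midpoint ℝ a b - midpoint ℝ c d‖^2 := by
  have hm : midpoint ℝ a b - midpoint ℝ c d = (2:ℝ)⁻¹ • (a + b - (c + d)) := by
    simp [midpoint_eq_smul_add, smul_sub]
  have hn : ‖midpoint ℝ a b - midpoint ℝ c d‖^2 = ‖a + b - (c + d)‖^2 / 4 := by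
    rw [hm, norm_smul]
    simp
    ring
  rw [hn]
  have p1 := parallelogram_law_with_norm ℝ (a-c) (b-d)
  have p2 := parallelogram_law_with_norm ℝ (a-d) (b-c)
  have p3 := parallelogram_law_with_norm ℝ (a-b) (c-d)
  have r1 : a-c+(b-d) = a+b-(c+d) := by abel
  have r2 : a-d+(b-c) = a+b-(c+d) := by abel
  have r3 : a-c-(b-d) = a-b-(c-d) := by abel
  have r4 : a-d-(b-c) = a-b+(c-d) := by abel
  rw [r1, r3] at p1
  rw [r2, r4] at p2
  simp only [pow_two] at h1 h2 ⊢
  linarith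

variable {E : Type*} [NormedAddCommGroup E] [InnerProductSpace ℝ E]

lemma centroid_ineq {ι : Type*} (S : Finset ι) (m : ι → E) (x : E) :
    ∑ e ∈ S, ∑ f ∈ S, ‖m e - m f‖^2 ≤ 2 * S.card * ∑ e ∈ S, ‖m e - x‖^2 := by
  set s := ∑ e ∈ S, m e with hs
  set n : ℝ := (S.card : ℝ) with hn
  have h1 : ∑ e ∈ S, ∑ f ∈ S, ‖m e - m f‖^2
      = 2 * n * ∑ e ∈ S, ‖m e‖^2 - 2 * ⟪s, s⟫ := by
    have key : ∀ e ∈ S, ∑ f ∈ S, ‖m e - m f‖^2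
        = n * ‖m e‖^2 + ∑ f ∈ S, ‖m f‖^2 - 2 * ⟪m e, s⟫ := by
      intro e _
      have h : ∀ f ∈ S, ‖m e - m f‖^2 = ‖m e‖^2 - 2 * ⟪m e, m f⟫ + ‖m f‖^2 := by
        intro f _; rw [@norm_sub_sq_real]
      rw [Finset.sum_congr rfl h]
      simp only [Finset.sum_add_distrib, Finset.sum_sub_distrib, Finset.sum_const,
        ← Finset.mul_sum, ← inner_sum, nsmul_eq_mul, ← hn, ← hs]
      ring
    rw [Finset.sum_congr rfl key]
    simp only [Finset.sum_sub_distrib, Finset.sum_add_distrib, Finset.sum_const,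
      ← Finset.mul_sum, ← sum_inner, nsmul_eq_mul, ← hn, ← hs]
    ring
  have h2 : ∑ e ∈ S, ‖m e - x‖^2
      = ∑ e ∈ S, ‖m e‖^2 - 2 * ⟪s, x⟫ + n * ‖x‖^2 := by
    have h : ∀ e ∈ S, ‖m e - x‖^2 = ‖m e‖^2 - 2 * ⟪m e, x⟫ + ‖x‖^2 := by
      intro e _; rw [@norm_sub_sq_real]
    rw [Finset.sum_congr rfl h]
    simp only [Finset.sum_add_distrib, Finset.sum_sub_distrib, Finset.sum_const,
      ← Finset.mul_sum, ← sum_inner, nsmul_eq_mul, ← hn, ← hs]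
  have h3 : (0:ℝ) ≤ ‖s - n • x‖^2 := sq_nonneg _
  have h4 : ‖s - n • x‖^2 = ⟪s,s⟫ - 2 * n * ⟪s, x⟫ + n^2 * ‖x‖^2 := by
    rw [@norm_sub_sq_real, real_inner_smul_right, norm_smul, real_inner_self_eq_norm_sq]
    rw [mul_pow]
    simp [sq_abs]
    ring
  rw [h1, h2]
  rw [h4] at h3
  nlinarith [sq_nonneg n]

variable {k : ℕ} {X : Finset (EuclideanSpace ℝ (Fin k))}
  {M : Finset (EuclideanSpace ℝ (Fin k) × EuclideanSpace ℝ (Fin k))}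

lemma vertex_unique (hM : IsPerfectMatching X M)
    {e f : EuclideanSpace ℝ (Fin k) × EuclideanSpace ℝ (Fin k)}
    (he : e ∈ M) (hf : f ∈ M) {v : EuclideanSpace ℝ (Fin k)}
    (hv1 : v = e.1 ∨ v = e.2) (hv2 : v = f.1 ∨ v = f.2) : e = f := by
  have hvX : v ∈ X := by
    rcases hv1 with rfl | rfl
    · exact (hM.1 e he).1
    · exact (hM.1 e he).2.1
  obtain ⟨g, -, hu⟩ := hM.2 v hvX
  exact (hu e ⟨he, hv1⟩).trans (hu f ⟨hf, hv2⟩).symm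

lemma swap_ineq (hM : IsPerfectMatching X M)
    (hmin : ∀ M', IsPerfectMatching X M' →
      ∑ e ∈ M, ‖e.1 - e.2‖ ^ 2 ≤ ∑ e ∈ M', ‖e.1 - e.2‖ ^ 2)
    {e f : EuclideanSpace ℝ (Fin k) × EuclideanSpace ℝ (Fin k)}
    (he : e ∈ M) (hf : f ∈ M) (hef : e ≠ f)
    {c d : EuclideanSpace ℝ (Fin k)}
    (hcd : (c = f.1 ∧ d = f.2) ∨ (c = f.2 ∧ d = f.1)) :
    ‖e.1 - e.2‖ ^ 2 + ‖f.1 - f.2‖ ^ 2 ≤ ‖e.1 - c‖ ^ 2 + ‖e.2 - d‖ ^ 2 := by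
  set a := e.1 with ha
  set b := e.2 with hb
  have hab : a ≠ b := (hM.1 e he).2.2
  have hf12 : f.1 ≠ f.2 := (hM.1 f hf).2.2
  have haf1 : a ≠ f.1 := fun h => hef (vertex_unique hM he hf (Or.inl rfl) (Or.inl h))
  have haf2 : a ≠ f.2 := fun h => hef (vertex_unique hM he hf (Or.inl rfl) (Or.inr h))
  have hbf1 : b ≠ f.1 := fun h => hef (vertex_unique hM he hf (Or.inr rfl) (Or.inl h))
  have hbf2 : b ≠ f.2 := fun h => hef (vertex_unique hM he hf (Or.inr rfl) (Or.inr h))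
  have hac : a ≠ c := by rcases hcd with ⟨rfl, -⟩ | ⟨rfl, -⟩ <;> assumption
  have had : a ≠ d := by rcases hcd with ⟨-, rfl⟩ | ⟨-, rfl⟩ <;> assumption
  have hbc : b ≠ c := by rcases hcd with ⟨rfl, -⟩ | ⟨rfl, -⟩ <;> assumption
  have hbd : b ≠ d := by rcases hcd with ⟨-, rfl⟩ | ⟨-, rfl⟩ <;> assumption
  have hcd' : c ≠ d := by
    rcases hcd with ⟨rfl, rfl⟩ | ⟨rfl, rfl⟩
    · exact hf12
    · exact hf12.symm
  have hcX : c ∈ X := by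
    rcases hcd with ⟨rfl, -⟩ | ⟨rfl, -⟩
    · exact (hM.1 f hf).1
    · exact (hM.1 f hf).2.1
  have hdX : d ∈ X := by
    rcases hcd with ⟨-, rfl⟩ | ⟨-, rfl⟩
    · exact (hM.1 f hf).2.1
    · exact (hM.1 f hf).1
  set R := (M.erase e).erase f with hR
  set M' := insert (a, c) (insert (b, d) R) with hM'def
  have hRM : ∀ g ∈ R, g ∈ M ∧ g ≠ e ∧ g ≠ f := by
    intro g hg
    rw [hR, Finset.mem_erase, Finset.mem_erase] at hg
    exact ⟨hg.2.2, hg.2.1, hg.1⟩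
  have hacM : (a, c) ∉ M := by
    intro h
    have := vertex_unique hM he h (Or.inl rfl) (Or.inl rfl)
    exact hbc (by rw [hb, this])
  have hbdM : (b, d) ∉ M := by
    intro h
    have := vertex_unique hM he h (Or.inr rfl) (Or.inl rfl)
    exact hbd (by rw [hb, this])
  -- characterize membership in M'
  have hmem : ∀ g, g ∈ M' ↔ g = (a, c) ∨ g = (b, d) ∨ g ∈ R := by
    intro g; simp [hM'def, Finset.mem_insert]
  have hM'pm : IsPerfectMatching X M' := by
    constructor
    · intro g hg
      rcases (hmem g).mp hg with rfl | rfl | hg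
      · exact ⟨(hM.1 e he).1, hcX, hac⟩
      · exact ⟨(hM.1 e he).2.1, hdX, hbd⟩
      · exact hM.1 g (hRM g hg).1
    · intro y hy
      obtain ⟨g₀, ⟨hg₀M, hg₀cov⟩, hu₀⟩ := hM.2 y hy
      by_cases hya : y = a
      · subst hya
        refine ⟨(a, c), ⟨(hmem _).mpr (Or.inl rfl), Or.inl rfl⟩, ?_⟩
        rintro g' ⟨hg', hcov'⟩
        rcases (hmem g').mp hg' with rfl | rfl | hg'R
        · rfl
        · simp at hcov'; rcases hcov' with h | h
          · exact absurd h hab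
          · exact absurd h had
        · obtain ⟨hg'M, hg'e, -⟩ := hRM g' hg'R
          exact absurd (vertex_unique hM hg'M he hcov' (Or.inl rfl)) hg'e
      · by_cases hyb : y = b
        · subst hyb
          refine ⟨(b, d), ⟨(hmem _).mpr (Or.inr (Or.inl rfl)), Or.inl rfl⟩, ?_⟩
          rintro g' ⟨hg', hcov'⟩
          rcases (hmem g').mp hg' with rfl | rfl | hg'R
          · simp at hcov'; rcases hcov' with h | h
            · exact absurd h.symm hab
            · exact absurd h hbc
          · rfl
          · obtain ⟨hg'M, hg'e, -⟩ := hRM g' hg'R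
            exact absurd (vertex_unique hM hg'M he hcov' (Or.inr rfl)) hg'e
        · by_cases hyc : y = c
          · have hyf : y = f.1 ∨ y = f.2 := by
              rcases hcd with ⟨rfl, -⟩ | ⟨rfl, -⟩
              · exact Or.inl hyc
              · exact Or.inr hyc
            refine ⟨(a, c), ⟨(hmem _).mpr (Or.inl rfl), Or.inr hyc⟩, ?_⟩
            rintro g' ⟨hg', hcov'⟩
            rcases (hmem g').mp hg' with rfl | rfl | hg'R
            · rfl
            · simp only [Prod.fst, Prod.snd] at hcov'; rcases hcov' with h | h
              · rw [hyc] at h; exact absurd h.symm hbc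
              · rw [hyc] at h; exact absurd h hcd'
            · obtain ⟨hg'M, -, hg'f⟩ := hRM g' hg'R
              exact absurd (vertex_unique hM hg'M hf hcov' hyf) hg'f
          · by_cases hyd : y = d
            · have hyf : y = f.1 ∨ y = f.2 := by
                rcases hcd with ⟨-, rfl⟩ | ⟨-, rfl⟩
                · exact Or.inr hyd
                · exact Or.inl hyd
              refine ⟨(b, d), ⟨(hmem _).mpr (Or.inr (Or.inl rfl)), Or.inr hyd⟩, ?_⟩
              rintro g' ⟨hg', hcov'⟩
              rcases (hmem g').mp hg' with rfl | rfl | hg'R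
              · simp only [Prod.fst, Prod.snd] at hcov'; rcases hcov' with h | h
                · rw [hyd] at h; exact absurd h.symm had
                · rw [hyd] at h; exact absurd h.symm hcd'
              · rfl
              · obtain ⟨hg'M, -, hg'f⟩ := hRM g' hg'R
                exact absurd (vertex_unique hM hg'M hf hcov' hyf) hg'f
            · -- y not among a,b,c,d
              have hg₀e : g₀ ≠ e := by
                rintro rfl
                rcases hg₀cov with h | h
                · exact hya h
                · exact hyb h
              have hg₀f : g₀ ≠ f := by
                rintro rfl
                rcases hcd with ⟨rfl, rfl⟩ | ⟨rfl, rfl⟩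
                · rcases hg₀cov with h | h
                  · exact hyc h
                  · exact hyd h
                · rcases hg₀cov with h | h
                  · exact hyd h
                  · exact hyc h
              have hg₀R : g₀ ∈ R := by
                rw [hR, Finset.mem_erase, Finset.mem_erase]
                exact ⟨hg₀f, hg₀e, hg₀M⟩
              refine ⟨g₀, ⟨(hmem _).mpr (Or.inr (Or.inr hg₀R)), hg₀cov⟩, ?_⟩
              rintro g' ⟨hg', hcov'⟩
              rcases (hmem g').mp hg' with rfl | rfl | hg'R
              · simp at hcov'; rcases hcov' with h | h
                · exact absurd h hya
                · exact absurd h hyc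
              · simp at hcov'; rcases hcov' with h | h
                · exact absurd h hyb
                · exact absurd h hyd
              · exact hu₀ g' ⟨(hRM g' hg'R).1, hcov'⟩
  -- sum computation
  have hsum := hmin M' hM'pm
  have hfe : f ∈ M.erase e := Finset.mem_erase.mpr ⟨Ne.symm hef, hf⟩
  have hsumM : ∑ g ∈ M, ‖g.1 - g.2‖ ^ 2
      = (∑ g ∈ R, ‖g.1 - g.2‖ ^ 2) + ‖f.1 - f.2‖ ^ 2 + ‖a - b‖ ^ 2 := by
    rw [hR, Finset.sum_erase_add _ _ hfe, Finset.sum_erase_add _ _ he]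
  have hacR : (a, c) ∉ insert (b, d) R := by
    rw [Finset.mem_insert]
    rintro (h | h)
    · exact hab (congrArg Prod.fst h)
    · exact hacM (hRM _ h).1
  have hbdR : (b, d) ∉ R := fun h => hbdM (hRM _ h).1
  have hsumM' : ∑ g ∈ M', ‖g.1 - g.2‖ ^ 2
      = ‖a - c‖ ^ 2 + (‖b - d‖ ^ 2 + ∑ g ∈ R, ‖g.1 - g.2‖ ^ 2) := by
    rw [hM'def, Finset.sum_insert hacR, Finset.sum_insert hbdR]
  rw [hsumM, hsumM'] at hsum
  linarith

open scoped RealInnerProductSpace in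
theorem matching_balls_tfold (k t : ℕ) (ht : 1 ≤ t)
    (X : Finset (EuclideanSpace ℝ (Fin k))) (heven : Even X.card)
    (M : Finset (EuclideanSpace ℝ (Fin k) × EuclideanSpace ℝ (Fin k)))
    (hM : IsPerfectMatching X M)
    (hmin : ∀ M', IsPerfectMatching X M' →
      ∑ e ∈ M, ‖e.1 - e.2‖ ^ 2 ≤ ∑ e ∈ M', ‖e.1 - e.2‖ ^ 2)
    (x : EuclideanSpace ℝ (Fin k)) :
    (M.filter fun e => ‖x - midpoint ℝ e.1 e.2‖ <
        Real.sqrt (t / (4 * (t + 1))) * ‖e.1 - e.2‖).card ≤ t := by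
  by_contra hcon
  push_neg at hcon
  set S := M.filter fun e => ‖x - midpoint ℝ e.1 e.2‖ <
      Real.sqrt (t / (4 * (t + 1))) * ‖e.1 - e.2‖ with hS
  set m : EuclideanSpace ℝ (Fin k) × EuclideanSpace ℝ (Fin k) → EuclideanSpace ℝ (Fin k) :=
    fun e => midpoint ℝ e.1 e.2 with hm
  set A : EuclideanSpace ℝ (Fin k) × EuclideanSpace ℝ (Fin k) → ℝ :=
    fun e => ‖e.1 - e.2‖ ^ 2 with hA
  have hSM : S ⊆ M := Finset.filter_subset _ _
  set tr : ℝ := (t : ℝ) with htr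
  have htr1 : (1:ℝ) ≤ tr := by rw [htr]; exact_mod_cast ht
  set n : ℝ := (S.card : ℝ) with hn
  have hnt : tr + 1 ≤ n := by
    rw [hn, htr]
    exact_mod_cast hcon
  have hSne : S.Nonempty := by
    rw [← Finset.card_pos]
    omega
  set c : ℝ := tr / (4 * (tr + 1)) with hc
  have hcnn : 0 ≤ c := div_nonneg (by linarith) (by linarith)
  have hball : ∀ e ∈ S, ‖m e - x‖ ^ 2 < c * A e := by
    intro e he
    rw [hS, Finset.mem_filter] at he
    have h := he.2
    rw [← norm_sub_rev x (m e)] at *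
    have hsq := pow_lt_pow_left₀ h (norm_nonneg _) two_ne_zero
    calc ‖x - m e‖ ^ 2 < (Real.sqrt (↑t / (4 * (↑t + 1))) * ‖e.1 - e.2‖) ^ 2 := hsq
      _ = c * A e := by
          rw [mul_pow, Real.sq_sqrt (by positivity)]
  have hApos : ∀ e ∈ S, 0 < A e := by
    intro e he
    have h12 := (hM.1 e (hSM he)).2.2
    have hne : e.1 - e.2 ≠ 0 := sub_ne_zero.mpr h12
    exact pow_pos (norm_pos_iff.mpr hne) 2
  -- pairwise midpoint distance bound
  have hpair : ∀ e ∈ S, ∀ f ∈ S, e ≠ f → (A e + A f) / 4 ≤ ‖m e - m f‖ ^ 2 := by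
    intro e he f hf hef
    have h1 := swap_ineq hM hmin (hSM he) (hSM hf) hef (Or.inl ⟨rfl, rfl⟩)
    have h2 := swap_ineq hM hmin (hSM he) (hSM hf) hef (Or.inr ⟨rfl, rfl⟩)
    exact mid_ineq e.1 e.2 f.1 f.2 h1 h2
  set SA : ℝ := ∑ e ∈ S, A e with hSA
  have hSApos : 0 < SA := Finset.sum_pos hApos hSne
  -- lower bound on the double sum
  have hlow : (n - 1) / 2 * SA ≤ ∑ e ∈ S, ∑ f ∈ S, ‖m e - m f‖ ^ 2 := by
    have step : ∀ e ∈ S, ((n - 1) * A e + (SA - A e)) / 4 ≤ ∑ f ∈ S, ‖m e - m f‖ ^ 2 := by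
      intro e he
      have h1 : ∑ f ∈ S.erase e, (A e + A f) / 4 ≤ ∑ f ∈ S.erase e, ‖m e - m f‖ ^ 2 := by
        refine Finset.sum_le_sum fun f hf => ?_
        exact hpair e he f (Finset.mem_of_mem_erase hf) (Ne.symm (Finset.mem_erase.mp hf).1)
      have h2 : ∑ f ∈ S.erase e, (A e + A f) / 4 = ((n - 1) * A e + (SA - A e)) / 4 := by
        rw [← Finset.sum_div]
        congr 1
        rw [Finset.sum_add_distrib, Finset.sum_const, Finset.sum_erase_eq_sub he,
          Finset.card_erase_of_mem he, nsmul_eq_mul, hSA, hn]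
        have hcard1 : 1 ≤ S.card := Finset.card_pos.mpr hSne
        push_cast [hcard1]
        ring
      have h3 : ∑ f ∈ S, ‖m e - m f‖ ^ 2 = ∑ f ∈ S.erase e, ‖m e - m f‖ ^ 2 := by
        rw [← Finset.sum_erase_add S _ he]
        simp
      rw [h3, ← h2]
      exact h1
    calc (n - 1) / 2 * SA = ∑ e ∈ S, ((n - 1) * A e + (SA - A e)) / 4 := by
          rw [← Finset.sum_div]
          rw [Finset.sum_add_distrib, Finset.sum_sub_distrib, ← Finset.mul_sum,
            Finset.sum_const, nsmul_eq_mul, ← hSA, ← hn]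
          ring
      _ ≤ _ := Finset.sum_le_sum step
  have hup := centroid_ineq S m x
  have hsum_lt : ∑ e ∈ S, ‖m e - x‖ ^ 2 < c * SA := by
    calc ∑ e ∈ S, ‖m e - x‖ ^ 2 < ∑ e ∈ S, c * A e :=
          Finset.sum_lt_sum_of_nonempty hSne hball
      _ = c * SA := by rw [← Finset.mul_sum, hSA]
  have hnpos : (0:ℝ) < n := by linarith
  have hfinal : (n - 1) / 2 * SA < 2 * n * (c * SA) := by
    calc (n - 1) / 2 * SA ≤ ∑ e ∈ S, ∑ f ∈ S, ‖m e - m f‖ ^ 2 := hlow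
      _ ≤ 2 * n * ∑ e ∈ S, ‖m e - x‖ ^ 2 := by rw [hn]; exact_mod_cast hup
      _ < 2 * n * (c * SA) := by
          apply mul_lt_mul_of_pos_left hsum_lt
          linarith
  have hceq : c * (4 * (tr + 1)) = tr := by
    rw [hc]
    field_simp
  have h4 : (0:ℝ) < 4 * (tr + 1) := by linarith
  have h5 := mul_lt_mul_of_pos_right hfinal h4
  have h6 : 2 * n * (c * SA) * (4 * (tr + 1)) = 2 * n * SA * (c * (4 * (tr + 1))) := by ring
  rw [h6, hceq] at h5
  nlinarith [mul_nonneg (sub_nonneg.mpr hnt) hSApos.le]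
end
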